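/- arXiv:math/0211385 — 5 statements merged into one kernel-verified Lean document; each statement's English description precedes it below -/
import Mathlib

section
/- Fusion for Sacks forcing: if (a_n)_{n∈ω} is a sequence of perfect trees with a_{n+1} ≤_n a_n for all n (where q ≤_n p means q ⊆ p and spl(q,n) = spl(p,n)), then a_ω = ⋂_{n∈ω} a_n is a perfect tree and a_ω ≤_n a_n for every n. -/
/-- A tree on ω^{<ω}: a set of finite sequences closed under initial segments. -/
def IsTree (T : Set (List ℕ)) : Prop :=
  ∀ s t : List ℕ, s <+: t → t ∈ T → s ∈ T

/-- `s` splits in `T`: at least two immediate successors of `s` lie in `T`. -/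
def Splits (T : Set (List ℕ)) (s : List ℕ) : Prop :=
  ∃ n m : ℕ, n ≠ m ∧ s ++ [n] ∈ T ∧ s ++ [m] ∈ T

/-- Perfect (Sacks) tree: nonempty tree in which every node has a splitting extension. -/
def IsPerfect (T : Set (List ℕ)) : Prop :=
  IsTree T ∧ T.Nonempty ∧ ∀ s ∈ T, ∃ t ∈ T, s <+: t ∧ Splits T t

/-- Restriction of a tree at a node: T^{[s]} = {t ∈ T : t ≤ s or s ≤ t}. -/
def restrictTree (T : Set (List ℕ)) (s : List ℕ) : Set (List ℕ) :=
  {t ∈ T | t <+: s ∨ s <+: t}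

/-- A branch of `p`: an element of ω^ω all of whose finite initial segments lie in `p`. -/
def IsBranch (p : Set (List ℕ)) (x : ℕ → ℕ) : Prop :=
  ∀ k : ℕ, (List.range k).map x ∈ p

/-- A front of `p`: an antichain (w.r.t. the initial segment order) meeting every branch. -/
def IsFront (p F : Set (List ℕ)) : Prop :=
  F ⊆ p ∧ (∀ s ∈ F, ∀ t ∈ F, s <+: t → s = t) ∧
    ∀ x : ℕ → ℕ, IsBranch p x → ∃ k, (List.range k).map x ∈ F

/-- The splitting nodes of `p`. -/
def spl (p : Set (List ℕ)) : Set (List ℕ) := {s ∈ p | Splits p s}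

/-- The n-th splitting nodes of `p`: splitting nodes with exactly `n` proper initial
segments that are splitting nodes. -/
def splN (p : Set (List ℕ)) (n : ℕ) : Set (List ℕ) :=
  {s ∈ spl p | {t ∈ spl p | t <+: s ∧ t ≠ s}.ncard = n}

/-- A Laver tree with stem `s₀`: every node is comparable with `s₀`, and every node
extending `s₀` has infinitely many immediate successors in the tree. -/
def IsLaverWithStem (T : Set (List ℕ)) (s₀ : List ℕ) : Prop :=
  IsTree T ∧ s₀ ∈ T ∧ (∀ t ∈ T, t <+: s₀ ∨ s₀ <+: t) ∧
    ∀ t ∈ T, s₀ <+: t → {n : ℕ | t ++ [n] ∈ T}.Infinite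

def IsLaver (T : Set (List ℕ)) : Prop := ∃ s₀, IsLaverWithStem T s₀

/-- Superperfect (Miller) tree. -/
def IsSuperperfect (T : Set (List ℕ)) : Prop :=
  IsTree T ∧ T.Nonempty ∧
    (∀ s ∈ T, {n : ℕ | s ++ [n] ∈ T}.ncard = 1 ∨ {n : ℕ | s ++ [n] ∈ T}.Infinite) ∧
    ∀ s ∈ T, ∃ t ∈ T, s <+: t ∧ {n : ℕ | t ++ [n] ∈ T}.Infinite

/-- Rosłanowski tree. -/
def IsRoslanowski (T : Set (List ℕ)) : Prop :=
  IsTree T ∧ T.Nonempty ∧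
    (∀ s ∈ T, {n : ℕ | s ++ [n] ∈ T}.ncard = 1 ∨ ∀ n : ℕ, s ++ [n] ∈ T) ∧
    ∀ s ∈ T, ∃ t ∈ T, s <+: t ∧ ∀ n : ℕ, t ++ [n] ∈ T

/-!
The splitting nodes of `⋂ n, a n` are exactly the nodes that are `n`-th splitting nodes of `a n`
for some `n`. Refining `a n` to `a (n + 1)` without changing the `n`-th splitting level changes
no lower level either (every `k`-th splitting node, `k ≤ n`, lies below an `n`-th one), so the
`n`-th splitting level of `a m` is the same for all `m ≥ n`. Each successor of an `n`-th
splitting node `t` of `a (n + 1)` lies below an `(n + 1)`-th splitting node, which survives in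
every `a m`; hence `t` keeps all its successors and still splits in the intersection.
-/

def splPreds (p : Set (List ℕ)) (s : List ℕ) : Set (List ℕ) :=
  {t ∈ spl p | t <+: s ∧ t ≠ s}

section SplittingNodes

variable {p q : Set (List ℕ)} {s t v w : List ℕ} {n N : ℕ}

theorem mem_splN : s ∈ splN p n ↔ s ∈ spl p ∧ (splPreds p s).ncard = n := Iff.rfl

theorem ncard_splPreds_of_mem_splN (hs : s ∈ splN p n) : (splPreds p s).ncard = n := hs.2

theorem splits_mono (h : q ⊆ p) : Splits q s → Splits p s :=
  fun ⟨i, j, hij, hi, hj⟩ => ⟨i, j, hij, h hi, h hj⟩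

theorem spl_mono (h : q ⊆ p) : spl q ⊆ spl p :=
  fun _ hs => ⟨h hs.1, splits_mono h hs.2⟩

theorem splPreds_mono (h : q ⊆ p) (s : List ℕ) : splPreds q s ⊆ splPreds p s :=
  fun _ hv => ⟨spl_mono h hv.1, hv.2⟩

theorem splPreds_finite (p : Set (List ℕ)) (s : List ℕ) : (splPreds p s).Finite :=
  s.inits.toFinset.finite_toSet.subset fun v hv => by simpa using hv.2.1

theorem ncard_splPreds_le_length (p : Set (List ℕ)) (s : List ℕ) :
    (splPreds p s).ncard ≤ s.length := by
  have hsub : splPreds p s ⊆ ↑(s.inits.toFinset.erase s) := fun v hv => by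
    simpa [hv.2.2] using hv.2.1
  calc (splPreds p s).ncard ≤ (s.inits.toFinset.erase s).card := by
        rw [← Set.ncard_coe_finset]; exact Set.ncard_le_ncard hsub
    _ ≤ s.length := by
        have := s.inits.toFinset_card_le
        rw [Finset.card_erase_of_mem (by simp), List.length_inits] at *
        omega

theorem splPreds_subset_of_prefix (hvs : v <+: s) (hne : v ≠ s) :
    splPreds p v ⊆ splPreds p s := by
  rintro u ⟨hu, huv, hne'⟩
  refine ⟨hu, huv.trans hvs, ?_⟩
  rintro rfl
  exact hne (hvs.eq_of_length (le_antisymm hvs.length_le huv.length_le))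

theorem ncard_splPreds_lt (hv : v ∈ splPreds p s) :
    (splPreds p v).ncard < (splPreds p s).ncard :=
  Set.ncard_lt_ncard ((Set.ssubset_iff_of_subset (splPreds_subset_of_prefix hv.2.1 hv.2.2)).2
    ⟨v, hv, fun h => h.2.2 rfl⟩) (splPreds_finite p s)

theorem mem_splPreds_of_prefix_append (ht : t ∈ spl p) {c : ℕ} (hw : t ++ [c] <+: w) :
    t ∈ splPreds p w := by
  refine ⟨ht, List.prefix_append t [c] |>.trans hw, ?_⟩
  rintro rfl
  simpa using hw.length_le

theorem splPreds_append_singleton_subset (p : Set (List ℕ)) (t : List ℕ) (c : ℕ) :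
    splPreds p (t ++ [c]) ⊆ insert t (splPreds p t) := by
  rintro v ⟨hv, hvt, hne⟩
  rcases List.prefix_concat_iff.1 hvt with h | h
  · exact absurd h hne
  · by_cases hvt' : v = t
    · exact .inl hvt'
    · exact .inr ⟨hv, h, hvt'⟩

/-- The longest element of `splPreds p s` is the immediate splitting predecessor of `s`. -/
theorem exists_mem_splPreds_ncard_add_one (h : (splPreds p s).Nonempty) :
    ∃ v ∈ splPreds p s, (splPreds p v).ncard + 1 = (splPreds p s).ncard := by
  obtain ⟨v, hv, hmax⟩ :=
    Set.Finite.exists_maximalFor List.length (splPreds p s) (splPreds_finite p s) h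
  have heq : splPreds p v = splPreds p s \ {v} := by
    refine (Set.subset_sdiff_singleton (splPreds_subset_of_prefix hv.2.1 hv.2.2)
      fun h => h.2.2 rfl).antisymm ?_
    rintro u ⟨hu, huv⟩
    have huv : u ≠ v := huv
    refine ⟨hu.1, ?_, huv⟩
    rcases List.prefix_or_prefix_of_prefix hu.2.1 hv.2.1 with h' | h'
    · exact h'
    · exact absurd (h'.eq_of_length (le_antisymm h'.length_le (hmax hu h'.length_le))).symm huv
  refine ⟨v, hv, ?_⟩
  have := Set.ncard_pos (splPreds_finite p s) |>.2 ⟨v, hv⟩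
  rw [heq, Set.ncard_sdiff_singleton_of_mem hv]
  omega

theorem exists_prefix_mem_splN (ht : t ∈ spl p) (hn : n ≤ (splPreds p t).ncard) :
    ∃ u ∈ splN p n, u <+: t := by
  induction hk : (splPreds p t).ncard generalizing t with
  | zero => exact ⟨t, mem_splN.2 ⟨ht, by omega⟩, List.prefix_refl t⟩
  | succ k ih =>
    rcases (hk ▸ hn).eq_or_lt with rfl | hlt
    · exact ⟨t, ⟨ht, hk⟩, List.prefix_refl t⟩
    obtain ⟨v, hv, hvk⟩ := exists_mem_splPreds_ncard_add_one (p := p) (s := t)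
      (Set.nonempty_of_ncard_ne_zero (by omega))
    obtain ⟨u, hu, huv⟩ := ih hv.1 (by omega) (by omega)
    exact ⟨u, hu, huv.trans hv.2.1⟩

theorem IsPerfect.exists_spl_le_ncard (hp : IsPerfect p) (hs : s ∈ p) (n : ℕ) :
    ∃ t ∈ spl p, s <+: t ∧ n ≤ (splPreds p t).ncard := by
  induction n with
  | zero =>
    obtain ⟨t, ht, hst, hsplit⟩ := hp.2.2 s hs
    exact ⟨t, ⟨ht, hsplit⟩, hst, Nat.zero_le _⟩
  | succ n ih =>
    obtain ⟨t, ht, hst, hn⟩ := ih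
    obtain ⟨i, -, -, hi, -⟩ := ht.2
    obtain ⟨u, hu, hiu, hsplit⟩ := hp.2.2 _ hi
    have hlt := ncard_splPreds_lt (mem_splPreds_of_prefix_append ht hiu)
    exact ⟨u, ⟨hu, hsplit⟩, hst.trans ((List.prefix_append t [i]).trans hiu), by omega⟩

theorem IsPerfect.exists_extension_mem_splN (hp : IsPerfect p) (hs : s ∈ p)
    (hN : (splPreds p s).ncard ≤ N) : ∃ w ∈ splN p N, s <+: w := by
  obtain ⟨t, ht, hst, hNt⟩ := hp.exists_spl_le_ncard hs N
  obtain ⟨w, hw, hwt⟩ := exists_prefix_mem_splN ht hNt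
  refine ⟨w, hw, ?_⟩
  rcases List.prefix_or_prefix_of_prefix hst hwt with h | h
  · exact h
  by_cases hws : w = s
  · exact hws ▸ List.prefix_refl w
  have := ncard_splPreds_lt ⟨hw.1, h, hws⟩
  rw [ncard_splPreds_of_mem_splN hw] at this
  omega

theorem spl_iff_of_prefix (hqp : q ⊆ p) (hwq : w ∈ splN q N) (hwp : w ∈ splN p N)
    (hvw : v <+: w) : v ∈ spl q ↔ v ∈ spl p := by
  by_cases hv : v = w
  · subst hv
    exact iff_of_true hwq.1 hwp.1
  have hpreds : splPreds q w = splPreds p w :=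
    Set.eq_of_subset_of_ncard_le (splPreds_mono hqp w) (hwp.2.trans hwq.2.symm).le
      (splPreds_finite p w)
  have := Set.ext_iff.1 hpreds v
  simpa [splPreds, hvw, hv] using this

theorem mem_splN_iff_of_prefix (hqp : q ⊆ p) (hwq : w ∈ splN q N) (hwp : w ∈ splN p N)
    (hsw : s <+: w) : s ∈ splN q n ↔ s ∈ splN p n := by
  have hpreds : splPreds q s = splPreds p s := by
    ext v
    simp only [splPreds, Set.mem_ofPred_eq, and_congr_left_iff]
    exact fun hvs => spl_iff_of_prefix hqp hwq hwp (hvs.1.trans hsw)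
  rw [mem_splN, mem_splN, hpreds, spl_iff_of_prefix hqp hwq hwp hsw]

theorem splN_eq_of_le (hp : IsPerfect p) (hq : IsPerfect q) (hqp : q ⊆ p)
    (hN : splN q N = splN p N) (hn : n ≤ N) : splN q n = splN p n := by
  ext s
  constructor
  · intro hs
    obtain ⟨w, hw, hsw⟩ := hq.exists_extension_mem_splN hs.1.1 (hs.2.trans_le hn)
    exact (mem_splN_iff_of_prefix hqp hw (hN ▸ hw) hsw).1 hs
  · intro hs
    obtain ⟨w, hw, hsw⟩ := hp.exists_extension_mem_splN hs.1.1 (hs.2.trans_le hn)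
    exact (mem_splN_iff_of_prefix hqp (hN ▸ hw) hw hsw).2 hs

end SplittingNodes

theorem IsTree.iInter {ι : Sort*} {a : ι → Set (List ℕ)} (ha : ∀ i, IsTree (a i)) :
    IsTree (⋂ i, a i) :=
  fun s t hst ht => Set.mem_iInter.2 fun i => ha i s t hst (Set.mem_iInter.1 ht i)

theorem IsPerfect.nil_mem {p : Set (List ℕ)} (hp : IsPerfect p) : [] ∈ p :=
  let ⟨s, hs⟩ := hp.2.1
  hp.1 [] s s.nil_prefix hs

/-- A fusion sequence: `a (n + 1) ≤ₙ a n` for every `n`. -/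
def IsFusionSequence (a : ℕ → Set (List ℕ)) : Prop :=
  (∀ n, IsPerfect (a n)) ∧ ∀ n, a (n + 1) ⊆ a n ∧ splN (a (n + 1)) n = splN (a n) n

namespace IsFusionSequence

variable {a : ℕ → Set (List ℕ)} {t : List ℕ} {n : ℕ}

theorem antitone (h : IsFusionSequence a) : Antitone a :=
  antitone_nat_of_succ_le fun n => (h.2 n).1

theorem splN_eq (h : IsFusionSequence a) {m : ℕ} (hnm : n ≤ m) :
    splN (a m) n = splN (a n) n := by
  induction m, hnm using Nat.le_induction with
  | base => rfl
  | succ m hnm ih =>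
    exact (splN_eq_of_le (h.1 m) (h.1 (m + 1)) (h.2 m).1 (h.2 m).2 hnm).trans ih

theorem mem_iInter (h : IsFusionSequence a) (ht : t ∈ splN (a n) n) : t ∈ ⋂ m, a m := by
  refine Set.mem_iInter.2 fun m => ?_
  rcases le_total m n with hmn | hnm
  · exact h.antitone hmn ht.1.1
  · exact (h.splN_eq hnm ▸ ht).1.1

theorem splits_iInter (h : IsFusionSequence a) (ht : t ∈ splN (a n) n) :
    Splits (⋂ m, a m) t := by
  have ht' : t ∈ splN (a (n + 1)) n := (h.2 n).2 ▸ ht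
  have hsucc : ∀ c, t ++ [c] ∈ a (n + 1) → t ++ [c] ∈ ⋂ m, a m := fun c hc => by
    have hle : (splPreds (a (n + 1)) (t ++ [c])).ncard ≤ n + 1 :=
      (Set.ncard_le_ncard (splPreds_append_singleton_subset _ t c)
        ((splPreds_finite _ t).insert t)).trans
        ((Set.ncard_insert_le t _).trans_eq (by rw [ncard_splPreds_of_mem_splN ht']))
    obtain ⟨w, hw, hcw⟩ := (h.1 (n + 1)).exists_extension_mem_splN hc hle
    exact IsTree.iInter (fun m => (h.1 m).1) _ w hcw (h.mem_iInter hw)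
  obtain ⟨i, j, hij, hi, hj⟩ := ht'.1.2
  exact ⟨i, j, hij, hsucc i hi, hsucc j hj⟩

theorem mem_spl_iInter (h : IsFusionSequence a) (ht : t ∈ splN (a n) n) :
    t ∈ spl (⋂ m, a m) :=
  ⟨h.mem_iInter ht, h.splits_iInter ht⟩

theorem splN_subset_splN_iInter (h : IsFusionSequence a) (n : ℕ) :
    splN (a n) n ⊆ splN (⋂ m, a m) n := by
  intro t ht
  have hpreds : splPreds (⋂ m, a m) t = splPreds (a n) t := by
    refine (splPreds_mono (Set.iInter_subset a n) t).antisymm fun v hv => ⟨?_, hv.2⟩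
    have hvn : (splPreds (a n) v).ncard ≤ n :=
      (ncard_splPreds_lt hv).le.trans_eq (ncard_splPreds_of_mem_splN ht)
    exact h.mem_spl_iInter (h.splN_eq hvn ▸ mem_splN.2 ⟨hv.1, rfl⟩)
  exact mem_splN.2 ⟨h.mem_spl_iInter ht, hpreds ▸ ncard_splPreds_of_mem_splN ht⟩

/-- The number `k` of splitting predecessors of `t` in `a t.length` is at most `t.length`, so
`t` is a `k`-th splitting node of `a k`, hence of `⋂ m, a m`; this pins down `k = n`. -/
theorem splN_iInter_subset (h : IsFusionSequence a) (n : ℕ) :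
    splN (⋂ m, a m) n ⊆ splN (a n) n := by
  intro t ht
  set k := (splPreds (a t.length) t).ncard
  have hk : t ∈ splN (a k) k := by
    rw [← h.splN_eq (ncard_splPreds_le_length _ t)]
    exact ⟨spl_mono (Set.iInter_subset a _) ht.1, rfl⟩
  have hkn : k = n := (h.splN_subset_splN_iInter k hk).2.symm.trans ht.2
  exact hkn ▸ hk

theorem isPerfect_iInter (h : IsFusionSequence a) : IsPerfect (⋂ m, a m) := by
  refine ⟨IsTree.iInter fun m => (h.1 m).1, ⟨[], Set.mem_iInter.2 fun m => (h.1 m).nil_mem⟩,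
    fun s hs => ?_⟩
  have hsL : s ∈ a s.length := Set.mem_iInter.1 hs _
  obtain ⟨w, hw, hsw⟩ := (h.1 _).exists_extension_mem_splN hsL (ncard_splPreds_le_length _ s)
  exact ⟨w, h.mem_iInter hw, hsw, h.splits_iInter hw⟩

end IsFusionSequence

/-- fusion for Sacks forcing. If `a (n+1) ≤ₙ a n` for all `n` (i.e.
`a (n+1) ⊆ a n` and the n-th splitting levels agree), then the intersection is a perfect
tree and `aω ≤ₙ a n` for every `n`. -/
theorem sacks_fusion (a : ℕ → Set (List ℕ)) (ha : ∀ n, IsPerfect (a n))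
    (hstep : ∀ n, a (n + 1) ⊆ a n ∧ splN (a (n + 1)) n = splN (a n) n) :
    IsPerfect (⋂ n, a n) ∧
      ∀ n, (⋂ m, a m) ⊆ a n ∧ splN (⋂ m, a m) n = splN (a n) n := by
  have h : IsFusionSequence a := ⟨ha, hstep⟩
  exact ⟨h.isPerfect_iInter, fun n => ⟨Set.iInter_subset a n,
    (h.splN_iInter_subset n).antisymm (h.splN_subset_splN_iInter n)⟩⟩
end

section
/- If p is a perfect tree, F ⊆ p a front, and q a perfect tree compatible with p (i.e., there is a perfect tree r with r ⊆ p and r ⊆ q), then q is compatible with p^{[s]} for some s ∈ F. -/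
/-- Every node of a perfect tree has an immediate successor in the tree. -/
lemma perfect_child {r : Set (List ℕ)} (hr : IsPerfect r) {t : List ℕ} (ht : t ∈ r) :
    ∃ n, t ++ [n] ∈ r := by
  obtain ⟨htree, -, hsplit⟩ := hr
  obtain ⟨u, hu, htu, n, m, hnm, hn, hm⟩ := hsplit t ht
  obtain ⟨v, rfl⟩ := htu
  cases v with
  | nil => exact ⟨n, by simpa using hn⟩
  | cons a w =>
    refine ⟨a, htree _ _ ?_ hn⟩
    exact ⟨w ++ [n], by simp⟩

/-- Restricting a perfect tree at one of its nodes gives a perfect tree. -/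
lemma perfect_restrict {p : Set (List ℕ)} (hp : IsPerfect p) {s : List ℕ} (hs : s ∈ p) :
    IsPerfect (restrictTree p s) := by
  obtain ⟨htree, -, hsplit⟩ := hp
  refine ⟨?_, ⟨s, hs, Or.inl List.prefix_rfl⟩, ?_⟩
  · rintro a b hab ⟨hb, hcomp⟩
    refine ⟨htree a b hab hb, ?_⟩
    rcases hcomp with h | h
    · exact Or.inl (hab.trans h)
    · exact List.prefix_or_prefix_of_prefix hab h
  · rintro t ⟨ht, hcomp⟩
    -- find a node w ∈ p with t <+: w and s <+: w
    obtain ⟨w, hw, htw, hsw⟩ : ∃ w ∈ p, t <+: w ∧ s <+: w := by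
      rcases hcomp with h | h
      · exact ⟨s, hs, h, List.prefix_rfl⟩
      · exact ⟨t, ht, List.prefix_rfl, h⟩
    obtain ⟨u, hu, hwu, n, m, hnm, hn, hm⟩ := hsplit w hw
    have hsu : s <+: u := hsw.trans hwu
    refine ⟨u, ⟨hu, Or.inr hsu⟩, htw.trans hwu, n, m, hnm, ?_, ?_⟩
    · exact ⟨hn, Or.inr (hsu.trans (List.prefix_append _ _))⟩
    · exact ⟨hm, Or.inr (hsu.trans (List.prefix_append _ _))⟩

/-- Every perfect tree has a branch, and every node along it lies in the tree. -/
lemma perfect_has_branch {r : Set (List ℕ)} (hr : IsPerfect r) : ∃ x, IsBranch r x := by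
  have hnil : [] ∈ r := by
    obtain ⟨htree, ⟨a, ha⟩, -⟩ := hr
    exact htree [] a List.nil_prefix ha
  have hc : ∀ t : List ℕ, ∃ n, t ∈ r → t ++ [n] ∈ r := by
    intro t
    by_cases ht : t ∈ r
    · obtain ⟨n, hn⟩ := perfect_child hr ht
      exact ⟨n, fun _ => hn⟩
    · exact ⟨0, fun h => absurd h ht⟩
  choose c hc using hc
  let f : ℕ → List ℕ := fun n => Nat.rec [] (fun _ t => t ++ [c t]) n
  have hf : ∀ n, f n ∈ r := by
    intro n
    induction n with
    | zero => exact hnil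
    | succ k ih => exact hc (f k) ih
  refine ⟨fun n => c (f n), ?_⟩
  have key : ∀ k, (List.range k).map (fun n => c (f n)) = f k := by
    intro k
    induction k with
    | zero => rfl
    | succ k ih => rw [List.range_succ, List.map_append, ih]; rfl
  intro k
  rw [key]
  exact hf k

/-- if `q` is a perfect tree compatible with `p` and `F` is a front of `p`,
then `q` is compatible with `p^{[s]}` for some `s ∈ F`. -/
theorem compatible_with_restrict (p : Set (List ℕ)) (hp : IsPerfect p) (F : Set (List ℕ))
    (hF : IsFront p F) (q : Set (List ℕ)) (hq : IsPerfect q)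
    (hcompat : ∃ r, IsPerfect r ∧ r ⊆ p ∧ r ⊆ q) :
    ∃ s ∈ F, ∃ r, IsPerfect r ∧ r ⊆ restrictTree p s ∧ r ⊆ q := by
  obtain ⟨r, hr, hrp, hrq⟩ := hcompat
  obtain ⟨x, hx⟩ := perfect_has_branch hr
  have hxp : IsBranch p x := fun k => hrp (hx k)
  obtain ⟨k, hk⟩ := hF.2.2 x hxp
  set s := (List.range k).map x with hs
  have hsr : s ∈ r := hx k
  refine ⟨s, hk, restrictTree r s, perfect_restrict hr hsr, ?_, ?_⟩
  · rintro t ⟨ht, hcomp⟩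
    exact ⟨hrp ht, hcomp⟩
  · rintro t ⟨ht, -⟩
    exact hrq ht
end

section
/- Well-definedness of the Laver rank: let p₀ be a Laver tree with stem s₀ and D a dense subset of Laver forcing (ordered by ⊆). Define rank_D(p₀,s) for s ∈ p₀ with s ≥ s₀ by: rank_D(p₀,s) = 0 if there is a Laver tree q ⊆ p₀ with q ∈ D and stem s; otherwise rank_D(p₀,s) is the least ordinal α such that infinitely many immediate successors t of s lie in p₀ and satisfy rank_D(p₀,t) < α. Then rank_D(p₀,s) is a well-defined ordinal for every s ∈ p₀ with s ≥ s₀. -/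
/-- A node strictly below `s` has only one immediate successor comparable with `s`. -/
theorem IsLaverWithStem.prefix_of_subset {q q' : Set (List ℕ)} {s s' : List ℕ}
    (hq : IsLaverWithStem q s) (hq' : IsLaverWithStem q' s') (hsub : q' ⊆ q) : s <+: s' := by
  rcases hq.2.2.1 s' (hsub hq'.2.1) with hs's | hss'
  · by_contra hne
    have hlt : s'.length < s.length := lt_of_le_of_ne hs's.length_le fun hlen =>
      hne (hs's.eq_of_length hlen ▸ List.prefix_rfl)
    have hsucc (n : ℕ) (hn : s' ++ [n] ∈ q') : s' ++ [n] <+: s := by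
      refine (hq.2.2.1 _ (hsub hn)).elim id fun hs => ?_
      rw [hs.eq_of_length (le_antisymm hs.length_le (by simpa using hlt))]
    obtain ⟨a, ha, b, hb, hab⟩ := (hq'.2.2.2 s' hq'.2.1 List.prefix_rfl).nontrivial
    have hpre := List.prefix_of_prefix_length_le (hsucc a ha) (hsucc b hb) (by simp)
    exact hab (by simpa using hpre.eq_of_length (by simp))
  · exact hss'

namespace LaverRank

universe u

variable (B p : Set (List ℕ))

/-- Off these nodes `rank` takes the junk value `sInf ∅ = 0`. -/
inductive Ranked : List ℕ → Prop
  | base {s : List ℕ} : s ∈ B → Ranked s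
  | step {s : List ℕ} (S : Set ℕ) : S.Infinite → (∀ n ∈ S, s ++ [n] ∈ p) →
      (∀ n ∈ S, Ranked (s ++ [n])) → Ranked s

/-- The nodes of rank at most `α`. -/
noncomputable def rankLE : Ordinal.{u} → Set (List ℕ) :=
  Ordinal.lt_wf.fix fun α rankLT =>
    {s | s ∈ B ∨ {n : ℕ | s ++ [n] ∈ p ∧ ∃ β, ∃ h : β < α, s ++ [n] ∈ rankLT β h}.Infinite}

noncomputable def rank (s : List ℕ) : Ordinal.{u} := sInf {α | s ∈ rankLE B p α}

def unrankedSubtree (s : List ℕ) : Set (List ℕ) :=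
  {t ∈ p | t <+: s ∨ s <+: t ∧ ∀ u, s <+: u → u <+: t → ¬Ranked B p u}

variable {B p}

theorem mem_rankLE {α : Ordinal.{u}} {s : List ℕ} :
    s ∈ rankLE B p α ↔
      s ∈ B ∨ {n : ℕ | s ++ [n] ∈ p ∧ ∃ β < α, s ++ [n] ∈ rankLE B p β}.Infinite := by
  unfold rankLE
  rw [WellFounded.fix_eq]
  simp only [Set.mem_ofPred_eq, exists_prop]

theorem rank_le {α : Ordinal.{u}} {s : List ℕ} (hs : s ∈ rankLE B p α) : rank B p s ≤ α :=
  csInf_le' hs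

theorem rank_eq_zero_of_mem {s : List ℕ} (hs : s ∈ B) : rank.{u} B p s = 0 :=
  nonpos_iff_eq_zero.1 (rank_le (mem_rankLE.2 (Or.inl hs)))

theorem Ranked.mem_rankLE_rank {s : List ℕ} (hs : Ranked B p s) :
    s ∈ rankLE B p (rank.{u} B p s) := by
  refine csInf_mem (s := {α | s ∈ rankLE B p α}) ?_
  induction hs with
  | base hs => exact ⟨0, mem_rankLE.2 (Or.inl hs)⟩
  | @step s S hS hSp _ ih =>
    refine ⟨(⨆ m, rank B p (s ++ [m])) + 1, mem_rankLE.2 (Or.inr (hS.mono fun n hn => ?_))⟩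
    exact ⟨hSp n hn, _, Order.lt_add_one_iff.2 (le_ciSup Ordinal.bddAbove_of_small n),
      csInf_mem (ih n hn)⟩

theorem rank_eq_sInf {s : List ℕ} (hB : s ∉ B) (hs : Ranked B p s)
    (hsucc : ∀ n, s ++ [n] ∈ p → Ranked B p (s ++ [n])) :
    {α : Ordinal.{u} | {n : ℕ | s ++ [n] ∈ p ∧ rank B p (s ++ [n]) < α}.Infinite}.Nonempty ∧
      rank B p s =
        sInf {α : Ordinal.{u} | {n : ℕ | s ++ [n] ∈ p ∧ rank B p (s ++ [n]) < α}.Infinite} := by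
  set A : Set Ordinal.{u} := {α | {n : ℕ | s ++ [n] ∈ p ∧ rank B p (s ++ [n]) < α}.Infinite}
  have hrank : rank B p s ∈ A := by
    refine ((mem_rankLE.1 hs.mem_rankLE_rank).resolve_left hB).mono ?_
    rintro n ⟨hn, β, hβ, hnβ⟩
    exact ⟨hn, (rank_le hnβ).trans_lt hβ⟩
  refine ⟨⟨_, hrank⟩, le_antisymm (rank_le (mem_rankLE.2 (Or.inr ?_))) (csInf_le' hrank)⟩
  refine (csInf_mem (⟨_, hrank⟩ : A.Nonempty)).mono ?_
  rintro n ⟨hn, hlt⟩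
  exact ⟨hn, _, hlt, (hsucc n hn).mem_rankLE_rank⟩

theorem infinite_succ_not_ranked {s : List ℕ} (hinf : {n : ℕ | s ++ [n] ∈ p}.Infinite)
    (hs : ¬Ranked B p s) : {n : ℕ | s ++ [n] ∈ p ∧ ¬Ranked B p (s ++ [n])}.Infinite := by
  by_contra hfin
  refine hs (.step _ (hinf.sdiff (Set.not_infinite.1 hfin)) (fun n hn => hn.1) ?_)
  rintro n ⟨hn, hnot⟩
  exact by_contra fun h => hnot ⟨hn, h⟩

theorem not_ranked_of_mem_unrankedSubtree {s t u : List ℕ} (hs : ¬Ranked B p s)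
    (ht : t ∈ unrankedSubtree B p s) (hsu : s <+: u) (hut : u <+: t) : ¬Ranked B p u := by
  rcases ht.2 with hts | ⟨-, hunranked⟩
  · have hus := hut.trans hts
    rwa [hus.eq_of_length (le_antisymm hus.length_le hsu.length_le)]
  · exact hunranked u hsu hut

theorem isLaverWithStem_unrankedSubtree {s : List ℕ} (hp : IsTree p) (hsp : s ∈ p)
    (hinf : ∀ t ∈ p, s <+: t → {n : ℕ | t ++ [n] ∈ p}.Infinite) (hs : ¬Ranked B p s) :
    IsLaverWithStem (unrankedSubtree B p s) s := by
  refine ⟨?tree, ⟨hsp, Or.inl List.prefix_rfl⟩, fun t ht => ht.2.imp_right And.left, ?succ⟩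
  case tree =>
    rintro a b hab ⟨hbp, hbs | ⟨hsb, hunranked⟩⟩
    · exact ⟨hp a b hab hbp, Or.inl (hab.trans hbs)⟩
    · refine ⟨hp a b hab hbp, ?_⟩
      rcases List.prefix_or_prefix_of_prefix hab hsb with has | hsa
      · exact Or.inl has
      · exact Or.inr ⟨hsa, fun u hsu hua => hunranked u hsu (hua.trans hab)⟩
  case succ =>
    intro t ht hst
    have htr := not_ranked_of_mem_unrankedSubtree hs ht hst List.prefix_rfl
    refine (infinite_succ_not_ranked (hinf t ht.1 hst) htr).mono ?_
    rintro n ⟨hn, hnr⟩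
    refine ⟨hn, Or.inr ⟨hst.trans (List.prefix_append t [n]), fun u hsu hut => ?_⟩⟩
    rcases List.prefix_concat_iff.1 hut with rfl | hut
    · exact hnr
    · exact not_ranked_of_mem_unrankedSubtree hs ht hsu hut

theorem ranked_of_dense {p₀ : Set (List ℕ)} {s₀ : List ℕ} (hp₀ : IsLaverWithStem p₀ s₀)
    {D : Set (Set (List ℕ))} (hD : ∀ q ∈ D, IsLaver q) (hdense : ∀ p, IsLaver p → ∃ q ∈ D, q ⊆ p)
    {s : List ℕ} (hs : s ∈ p₀) (hs₀ : s₀ <+: s) :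
    Ranked {t | ∃ q, q ∈ D ∧ q ⊆ p₀ ∧ IsLaverWithStem q t} p₀ s := by
  by_contra hunranked
  have hq := isLaverWithStem_unrankedSubtree hp₀.1 hs
    (fun t ht hst => hp₀.2.2.2 t ht (hs₀.trans hst)) hunranked
  obtain ⟨q, hqD, hqsub⟩ := hdense _ ⟨s, hq⟩
  obtain ⟨t, hqt⟩ := hD q hqD
  have hqp₀ : q ⊆ p₀ := fun _ hu => (hqsub hu).1
  exact not_ranked_of_mem_unrankedSubtree hunranked (hqsub hqt.2.1)
    (hq.prefix_of_subset hqt hqsub) List.prefix_rfl (.base ⟨q, hqD, hqp₀, hqt⟩)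

end LaverRank

/-- well-definedness of the Laver rank. For a Laver tree `p₀` with stem `s₀`
and a dense set `D` of Laver conditions there is an ordinal-valued rank function `r`
satisfying the defining recursion: `r s = 0` iff some Laver tree `q ⊆ p₀` with stem `s`
lies in `D`; otherwise `r s` is the least ordinal `α` such that infinitely many immediate
successors `t` of `s` lie in `p₀` and satisfy `r t < α` (in particular such an `α` exists). -/
theorem laver_rank_wellDefined (p₀ : Set (List ℕ)) (s₀ : List ℕ)
    (hp₀ : IsLaverWithStem p₀ s₀) (D : Set (Set (List ℕ))) (hD : ∀ q ∈ D, IsLaver q)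
    (hdense : ∀ p, IsLaver p → ∃ q ∈ D, q ⊆ p) :
    ∃ r : List ℕ → Ordinal,
      ∀ s ∈ p₀, s₀ <+: s →
        ((∃ q, q ∈ D ∧ q ⊆ p₀ ∧ IsLaverWithStem q s) → r s = 0) ∧
        (¬ (∃ q, q ∈ D ∧ q ⊆ p₀ ∧ IsLaverWithStem q s) →
          {α : Ordinal | {n : ℕ | s ++ [n] ∈ p₀ ∧ r (s ++ [n]) < α}.Infinite}.Nonempty ∧
          r s = sInf {α : Ordinal | {n : ℕ | s ++ [n] ∈ p₀ ∧ r (s ++ [n]) < α}.Infinite}) :=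
  ⟨LaverRank.rank {t | ∃ q, q ∈ D ∧ q ⊆ p₀ ∧ IsLaverWithStem q t} p₀, fun s hs hs₀ =>
    ⟨fun hB => LaverRank.rank_eq_zero_of_mem hB, fun hB => LaverRank.rank_eq_sInf hB
      (LaverRank.ranked_of_dense hp₀ hD hdense hs hs₀) fun n hn =>
        LaverRank.ranked_of_dense hp₀ hD hdense hn (hs₀.trans (List.prefix_append s [n]))⟩⟩
end

section
/- Pure decision/front lemma for Laver forcing: if D is a dense open subset of Laver forcing and p a Laver tree with stem s₀, then there is a Laver tree q ⊆ p with stem s₀ and a front F ⊆ q such that q^{[s]} ∈ D for every s ∈ F. -/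
/-!
Call a node `t ⊇ s₀` of `p` good if some Laver tree with stem `t` inside `p` has a front above
`t` all of whose restrictions lie in `D`. A node with infinitely many good immediate successors is
good: glue the witnessing trees and fronts together. So if the stem were bad, every bad node would
have infinitely many bad successors, and the nodes of `p` with only bad initial segments above `s₀`
would form a Laver tree `r`. By density some `q ∈ D` lies below `r`. A long enough node `u` of `q`
extends `s₀` and is good, witnessed by `q^{[u]} ∈ D` with the front `{u}`, although `u ∈ r` is bad.
-/

lemma List.map_range_prefix_map_range {α : Type*} (x : ℕ → α) {j k : ℕ} (h : j ≤ k) :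
    (List.range j).map x <+: (List.range k).map x := by
  refine List.IsPrefix.map x ?_
  rw [List.prefix_iff_eq_take, List.length_range, List.take_range, min_eq_left h]

lemma List.eq_of_append_singleton_prefix {α : Type*} {t u : List α} {n m : α}
    (hn : t ++ [n] <+: u) (hm : t ++ [m] <+: u) : n = m := by
  have h := (List.prefix_of_prefix_length_le hn hm (by simp)).eq_of_length (by simp)
  simpa using h

namespace IsLaverWithStem

variable {q : Set (List ℕ)} {s : List ℕ}

lemma prefix_of_length_le (hq : IsLaverWithStem q s) {u : List ℕ} (hu : u ∈ q)
    (hlen : s.length ≤ u.length) : s <+: u := by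
  rcases hq.2.2.1 u hu with h | h
  · rw [h.eq_of_length (le_antisymm h.length_le hlen)]
  · exact h

lemma restrictTree_stem (hq : IsLaverWithStem q s) : restrictTree q s = q :=
  Set.ext fun u => ⟨fun hu => hu.1, fun hu => ⟨hu, hq.2.2.1 u hu⟩⟩

lemma isFront_singleton (hq : IsLaverWithStem q s) : IsFront q {s} := by
  refine ⟨Set.singleton_subset_iff.2 hq.2.1, ?_, fun x hx => ⟨s.length, ?_⟩⟩
  · rintro a rfl b rfl -
    rfl
  · exact ((hq.prefix_of_length_le (hx s.length) (by simp)).eq_of_length (by simp)).symm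

lemma restrictTree_of_prefix {s' : List ℕ} (hq : IsLaverWithStem q s) (hs : s <+: s')
    (hs' : s' ∈ q) : IsLaverWithStem (restrictTree q s') s' := by
  obtain ⟨htree, -, -, hsucc⟩ := hq
  refine ⟨fun u v huv hv => ⟨htree u v huv hv.1, ?_⟩, ⟨hs', Or.inl List.prefix_rfl⟩,
    fun t ht => ht.2, fun u hu hsu => ?_⟩
  · rcases hv.2 with h | h
    · exact Or.inl (huv.trans h)
    · exact List.prefix_or_prefix_of_prefix huv h
  · exact (hsucc u hu.1 (hs.trans hsu)).mono fun n hn =>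
      ⟨hn, Or.inr (hsu.trans (List.prefix_append u [n]))⟩

lemma exists_mem_length_eq (hq : IsLaverWithStem q s) (k : ℕ) :
    ∃ u ∈ q, s <+: u ∧ u.length = s.length + k := by
  induction k with
  | zero => exact ⟨s, hq.2.1, List.prefix_rfl, rfl⟩
  | succ k ih =>
    obtain ⟨u, hu, hsu, hlen⟩ := ih
    obtain ⟨n, hn⟩ := (hq.2.2.2 u hu hsu).nonempty
    exact ⟨u ++ [n], hn, hsu.trans (List.prefix_append u [n]), by simp [hlen, add_assoc]⟩

lemma prune (hq : IsLaverWithStem q s) {B : List ℕ → Prop} (hB : B s)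
    (hsucc : ∀ u ∈ q, s <+: u → B u → {n | u ++ [n] ∈ q ∧ B (u ++ [n])}.Infinite) :
    IsLaverWithStem {u ∈ q | ∀ w, s <+: w → w <+: u → B w} s := by
  obtain ⟨htree, hs, hcomp, -⟩ := hq
  refine ⟨fun u v huv hv => ⟨htree u v huv hv.1, fun w hsw hwu => hv.2 w hsw (hwu.trans huv)⟩,
    ⟨hs, fun w hsw hws => ?_⟩, fun u hu => hcomp u hu.1, fun u hu hsu => ?_⟩
  · rwa [hws.eq_of_length_le hsw.length_le]
  · refine (hsucc u hu.1 hsu (hu.2 u hsu List.prefix_rfl)).mono fun n hn => ⟨hn.1, ?_⟩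
    intro w hsw hwu
    rcases List.prefix_concat_iff.1 hwu with rfl | h
    · exact hn.2
    · exact hu.2 w hsw h

end IsLaverWithStem

/-- Glues trees `Q n` with stems `t ++ [n]` together above `t`. -/
def amalgam (t : List ℕ) (S : Set ℕ) (Q : ℕ → Set (List ℕ)) : Set (List ℕ) :=
  {u | u <+: t} ∪ ⋃ n ∈ S, Q n

section Amalgam

variable {t : List ℕ} {S : Set ℕ} {Q : ℕ → Set (List ℕ)}

lemma subset_amalgam {n : ℕ} (hn : n ∈ S) : Q n ⊆ amalgam t S Q :=
  fun _ hu => Or.inr (Set.mem_biUnion hn hu)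

lemma mem_amalgam_cases (hQ : ∀ n ∈ S, IsLaverWithStem (Q n) (t ++ [n])) {u : List ℕ}
    (hu : u ∈ amalgam t S Q) : u <+: t ∨ ∃ n ∈ S, u ∈ Q n ∧ t ++ [n] <+: u := by
  rcases hu with hu | hu
  · exact Or.inl hu
  obtain ⟨n, hn, hun⟩ := Set.mem_iUnion₂.1 hu
  rcases (hQ n hn).2.2.1 u hun with h | h
  · rcases List.prefix_concat_iff.1 h with rfl | h
    · exact Or.inr ⟨n, hn, hun, List.prefix_rfl⟩
    · exact Or.inl h
  · exact Or.inr ⟨n, hn, hun, h⟩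

lemma mem_of_mem_amalgam (hQ : ∀ n ∈ S, IsLaverWithStem (Q n) (t ++ [n])) {u : List ℕ}
    (hu : u ∈ amalgam t S Q) {n : ℕ} (hnu : t ++ [n] <+: u) : n ∈ S ∧ u ∈ Q n := by
  rcases mem_amalgam_cases hQ hu with h | ⟨m, hm, hum, hmu⟩
  · have := (hnu.trans h).length_le
    simp at this
  · obtain rfl := List.eq_of_append_singleton_prefix hmu hnu
    exact ⟨hm, hum⟩

lemma isLaverWithStem_amalgam (hQ : ∀ n ∈ S, IsLaverWithStem (Q n) (t ++ [n]))
    (hS : S.Infinite) : IsLaverWithStem (amalgam t S Q) t := by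
  refine ⟨fun u v huv hv => ?_, Or.inl List.prefix_rfl, fun u hu => ?_, fun u hu htu => ?_⟩
  · rcases mem_amalgam_cases hQ hv with h | ⟨n, hn, hvn, -⟩
    · exact Or.inl (huv.trans h)
    · exact subset_amalgam hn ((hQ n hn).1 u v huv hvn)
  · rcases mem_amalgam_cases hQ hu with h | ⟨n, -, -, h⟩
    · exact Or.inl h
    · exact Or.inr ((List.prefix_append t [n]).trans h)
  · rcases mem_amalgam_cases hQ hu with h | ⟨n, hn, hun, hnu⟩
    · obtain rfl := htu.eq_of_length_le h.length_le
      exact hS.mono fun n hn => subset_amalgam hn (hQ n hn).2.1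
    · exact ((hQ n hn).2.2.2 u hun hnu).mono fun m hm => subset_amalgam hn hm

variable {F : ℕ → Set (List ℕ)}

lemma isFront_amalgam (hQ : ∀ n ∈ S, IsLaverWithStem (Q n) (t ++ [n]))
    (hF : ∀ n ∈ S, IsFront (Q n) (F n)) (hFt : ∀ n ∈ S, ∀ s ∈ F n, t ++ [n] <+: s) :
    IsFront (amalgam t S Q) (⋃ n ∈ S, F n) := by
  simp only [IsFront, Set.iUnion₂_subset_iff, Set.mem_iUnion₂, exists_prop,
    forall_exists_index, and_imp]
  refine ⟨fun n hn => (hF n hn).1.trans (subset_amalgam hn), ?_, fun x hx => ?_⟩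
  · intro a n hn ha b m hm hb hab
    obtain rfl := List.eq_of_append_singleton_prefix ((hFt n hn a ha).trans hab) (hFt m hm b hb)
    exact (hF n hn).2.1 a ha b hb hab
  · obtain ⟨n, hn, -, hnx⟩ : ∃ n ∈ S, _ ∧ t ++ [n] <+: (List.range (t.length + 1)).map x := by
      refine (mem_amalgam_cases hQ (hx _)).resolve_left fun h => ?_
      simpa using h.length_le
    have hbranch : IsBranch (Q n) x := fun k => by
      have hk := List.map_range_prefix_map_range x (le_max_left k (t.length + 1))
      have hnk := hnx.trans (List.map_range_prefix_map_range x (le_max_right k (t.length + 1)))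
      exact (hQ n hn).1 _ _ hk (mem_of_mem_amalgam hQ (hx _) hnk).2
    obtain ⟨k, hk⟩ := (hF n hn).2.2 x hbranch
    exact ⟨k, n, hn, hk⟩

lemma restrictTree_amalgam (hQ : ∀ n ∈ S, IsLaverWithStem (Q n) (t ++ [n])) {n : ℕ}
    (hn : n ∈ S) {s : List ℕ} (hs : s ∈ Q n) (hns : t ++ [n] <+: s) :
    restrictTree (amalgam t S Q) s = restrictTree (Q n) s := by
  ext u
  refine ⟨fun ⟨hu, hus⟩ => ⟨?_, hus⟩, fun ⟨hu, hus⟩ => ⟨subset_amalgam hn hu, hus⟩⟩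
  rcases hus with h | h
  · exact (hQ n hn).1 u s h hs
  · exact (mem_of_mem_amalgam hQ hu (hns.trans h)).2

end Amalgam

def HasDenseFrontAt (D : Set (Set (List ℕ))) (p : Set (List ℕ)) (t : List ℕ) : Prop :=
  ∃ q F, IsLaverWithStem q t ∧ q ⊆ p ∧ IsFront q F ∧ (∀ s ∈ F, t <+: s) ∧
    ∀ s ∈ F, restrictTree q s ∈ D

section HasDenseFrontAt

variable {D : Set (Set (List ℕ))} {p : Set (List ℕ)} {t : List ℕ}

lemma hasDenseFrontAt_of_mem {q : Set (List ℕ)} (hq : IsLaverWithStem q t) (hqp : q ⊆ p)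
    (hqD : q ∈ D) : HasDenseFrontAt D p t := by
  refine ⟨q, {t}, hq, hqp, hq.isFront_singleton, ?_, ?_⟩
  · rintro s rfl
    exact List.prefix_rfl
  · rintro s rfl
    rwa [hq.restrictTree_stem]

lemma hasDenseFrontAt_of_infinite (hp : IsTree p) (ht : t ∈ p)
    (hS : {n | HasDenseFrontAt D p (t ++ [n])}.Infinite) : HasDenseFrontAt D p t := by
  set S := {n | HasDenseFrontAt D p (t ++ [n])}
  have hgood : ∀ n ∈ S, HasDenseFrontAt D p (t ++ [n]) := fun _ hn => hn
  choose! Q F hQ hQp hF hFt hFD using hgood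
  refine ⟨amalgam t S Q, ⋃ n ∈ S, F n, isLaverWithStem_amalgam hQ hS, fun u hu => ?_,
    isFront_amalgam hQ hF hFt, ?_, ?_⟩
  · rcases mem_amalgam_cases hQ hu with h | ⟨n, hn, hun, -⟩
    · exact hp u t h ht
    · exact hQp n hn hun
  · simp only [Set.mem_iUnion₂, exists_prop, forall_exists_index, and_imp]
    exact fun s n hn hs => (List.prefix_append t [n]).trans (hFt n hn s hs)
  · simp only [Set.mem_iUnion₂, exists_prop, forall_exists_index, and_imp]
    intro s n hn hs
    rw [restrictTree_amalgam hQ hn ((hF n hn).1 hs) (hFt n hn s hs)]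
    exact hFD n hn s hs

lemma IsLaverWithStem.infinite_succ_not_hasDenseFrontAt {s₀ : List ℕ}
    (hp : IsLaverWithStem p s₀) (ht : t ∈ p) (hst : s₀ <+: t) (hbad : ¬ HasDenseFrontAt D p t) :
    {n | t ++ [n] ∈ p ∧ ¬ HasDenseFrontAt D p (t ++ [n])}.Infinite := by
  intro hfin
  refine hbad (hasDenseFrontAt_of_infinite hp.1 ht ?_)
  refine ((hp.2.2.2 t ht hst).sdiff hfin).mono ?_
  rintro n ⟨hn, hnbad⟩
  by_contra hg
  exact hnbad ⟨hn, hg⟩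

end HasDenseFrontAt

/-- pure decision / front lemma for Laver forcing. -/
theorem laver_pure_decision (D : Set (Set (List ℕ))) (hD : ∀ q ∈ D, IsLaver q)
    (hdense : ∀ p, IsLaver p → ∃ q ∈ D, q ⊆ p)
    (hopen : ∀ q ∈ D, ∀ r, IsLaver r → r ⊆ q → r ∈ D)
    (p : Set (List ℕ)) (s₀ : List ℕ) (hp : IsLaverWithStem p s₀) :
    ∃ q, IsLaverWithStem q s₀ ∧ q ⊆ p ∧
      ∃ F, IsFront q F ∧ ∀ s ∈ F, restrictTree q s ∈ D := by
  have hgood : HasDenseFrontAt D p s₀ := by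
    by_contra hbad
    have hr := hp.prune hbad fun _ hu hsu => hp.infinite_succ_not_hasDenseFrontAt hu hsu
    obtain ⟨q, hqD, hqr⟩ := hdense _ ⟨s₀, hr⟩
    obtain ⟨s₁, hq⟩ := hD q hqD
    obtain ⟨u, hu, hs₁u, hlen⟩ := hq.exists_mem_length_eq s₀.length
    have hs₀u : s₀ <+: u := hp.prefix_of_length_le (hqr hu).1 (by omega)
    have hqu := hq.restrictTree_of_prefix hs₁u hu
    refine (hqr hu).2 u hs₀u List.prefix_rfl (hasDenseFrontAt_of_mem hqu ?_ ?_)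
    · exact fun v hv => (hqr hv.1).1
    · exact hopen q hqD _ ⟨u, hqu⟩ fun v hv => hv.1
  obtain ⟨q, F, hq, hqp, hF, -, hFD⟩ := hgood
  exact ⟨q, hq, hqp, F, hF, hFD⟩
end

section
/- In a Boolean algebra B with a complete subalgebra C ≠ B: if b₀ ∈ B is such that no nonzero b' ≤ b₀ lies in C, and c = inf{c' ∈ C : c' ≥ b₀} and b₁ = c \ b₀, then for every c' ∈ C, c' is compatible with b₀ (c' ∧ b₀ ≠ 0) if and only if c' is compatible with b₁. -/
/-- in a complete Boolean algebra `B` with complete subalgebra `C`, if no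
nonzero element of `C` lies below `b₀ ≠ ⊥`, `c = inf{c' ∈ C : c' ≥ b₀}` and
`b₁ = c \ b₀`, then every `c' ∈ C` is compatible with `b₀` iff it is compatible with `b₁`. -/
theorem subalgebra_compat_iff {B : Type*} [CompleteBooleanAlgebra B] (C : Set B)
    (hCsup : ∀ S ⊆ C, sSup S ∈ C) (hCinf : ∀ S ⊆ C, sInf S ∈ C)
    (hCcompl : ∀ c ∈ C, cᶜ ∈ C)
    (b₀ : B) (hb₀ : b₀ ≠ ⊥)
    (hmin : ∀ b' ∈ C, b' ≤ b₀ → b' = ⊥) :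
    ∀ c' ∈ C,
      (c' ⊓ b₀ ≠ ⊥ ↔ c' ⊓ (sInf {c ∈ C | b₀ ≤ c} \ b₀) ≠ ⊥) := by
  intro c' hc'
  set c : B := sInf {c ∈ C | b₀ ≤ c} with hc
  have hcC : c ∈ C := hCinf _ (fun x hx => hx.1)
  have hb₀c : b₀ ≤ c := le_sInf (fun x hx => hx.2)
  -- key: if c'' ∈ C and c'' ⊓ b₀ = ⊥ then c'' ⊓ c = ⊥
  have key : ∀ c'' ∈ C, c'' ⊓ b₀ = ⊥ → c'' ⊓ c = ⊥ := by
    intro c'' hC h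
    have h1 : b₀ ≤ c''ᶜ := le_compl_iff_disjoint_left.2 (disjoint_iff.2 h)
    have h2 : c ≤ c''ᶜ := sInf_le ⟨hCcompl _ hC, h1⟩
    exact disjoint_iff.1 (le_compl_iff_disjoint_left.1 h2)
  constructor
  · intro h hcontra
    -- c' ⊓ c ⊓ b₀ᶜ = ⊥, so c' ⊓ c ≤ b₀, and c' ⊓ c ∈ C, so c' ⊓ c = ⊥
    have h1 : c' ⊓ c ≤ b₀ := by
      have : Disjoint (c' ⊓ c) b₀ᶜ := disjoint_iff.2 (by
        rw [sdiff_eq] at hcontra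
        rw [inf_assoc]; exact hcontra)
      simpa using (le_compl_iff_disjoint_right.2 this)
    have h2 : c' ⊓ c ∈ C := by
      have := hCinf {c', c} (by rintro x (rfl | rfl); exacts [hc', hcC])
      rwa [sInf_pair] at this
    have h3 : c' ⊓ c = ⊥ := hmin _ h2 h1
    exact h (le_bot_iff.1 ((inf_le_inf_left c' hb₀c).trans h3.le))
  · intro h hcontra
    have h1 : c' ⊓ c = ⊥ := key _ hc' hcontra
    exact h (le_bot_iff.1 ((inf_le_inf_left c' (sdiff_le : c \ b₀ ≤ c)).trans h1.le))
end
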